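/- (Uncertainty principle) If X ∈ ℝ^{m×n} is a nonzero matrix, then taking X̄_S = X̄_L = X in the definitions of α and β, one has inf_{ρ>0} α(ρ)β(ρ) ≥ 1. In other words, a nonzero matrix cannot simultaneously have small sparsity measure α(ρ) and small singular-vector incoherence β(ρ) with α(ρ)β(ρ) < 1 for any ρ. -/

import Mathlib

open scoped BigOperators
open Matrix
noncomputable section

namespace SLR

/-- Trace inner product `⟨A,B⟩ = tr(AᵀB)`. -/
def inner' {m n : ℕ} (A B : Matrix (Fin m) (Fin n) ℝ) : ℝ := ∑ i, ∑ j, A i j * B i j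

/-- Entrywise 1-norm. -/
def l1 {m n : ℕ} (M : Matrix (Fin m) (Fin n) ℝ) : ℝ := ∑ i, ∑ j, |M i j|

/-- Entrywise ∞-norm (maximum absolute value of an entry). -/
def linf {m n : ℕ} (M : Matrix (Fin m) (Fin n) ℝ) : ℝ := ⨆ i, ⨆ j, |M i j|

/-- Frobenius norm. -/
def frob {m n : ℕ} (M : Matrix (Fin m) (Fin n) ℝ) : ℝ :=
  Real.sqrt (∑ i, ∑ j, (M i j) ^ 2)

/-- `‖M‖_{1→1}`: maximum column absolute sum. -/
def n11 {m n : ℕ} (M : Matrix (Fin m) (Fin n) ℝ) : ℝ := ⨆ j, ∑ i, |M i j|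

/-- `‖M‖_{∞→∞}`: maximum row absolute sum. -/
def nII {m n : ℕ} (M : Matrix (Fin m) (Fin n) ℝ) : ℝ := ⨆ i, ∑ j, |M i j|

/-- Spectral norm `‖M‖_{2→2}`. -/
def spec {m n : ℕ} (M : Matrix (Fin m) (Fin n) ℝ) : ℝ :=
  ‖LinearMap.toContinuousLinearMap (Matrix.toEuclideanLin M)‖

/-- Trace (nuclear) norm: sum of singular values. -/
def traceNorm {m n : ℕ} (M : Matrix (Fin m) (Fin n) ℝ) : ℝ :=
  ∑ i, Real.sqrt ((show (Mᵀ * M).IsHermitian by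
    simpa using Matrix.isHermitian_conjTranspose_mul_self M).eigenvalues i)

/-- The hybrid norm `‖M‖_{♯(ρ)} = max{ρ‖M‖_{1→1}, ρ⁻¹‖M‖_{∞→∞}}`. -/
def sharp {m n : ℕ} (ρ : ℝ) (M : Matrix (Fin m) (Fin n) ℝ) : ℝ :=
  max (ρ * n11 M) (ρ⁻¹ * nII M)

/-- The dual norm `‖·‖_{♭(ρ)}` of `‖·‖_{♯(ρ)}`. -/
def flat {m n : ℕ} (ρ : ℝ) (M : Matrix (Fin m) (Fin n) ℝ) : ℝ :=
  sSup {x : ℝ | ∃ N : Matrix (Fin m) (Fin n) ℝ, sharp ρ N ≤ 1 ∧ x = inner' M N}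

/-- Induced operator norm of a map `T` with respect to the norm `f`. -/
def opNormWrt {m n : ℕ} (f : Matrix (Fin m) (Fin n) ℝ → ℝ)
    (T : Matrix (Fin m) (Fin n) ℝ → Matrix (Fin m) (Fin n) ℝ) : ℝ :=
  sSup {x : ℝ | ∃ M, f M ≤ 1 ∧ x = f (T M)}

/-- Entrywise sign matrix. -/
def signM {m n : ℕ} (M : Matrix (Fin m) (Fin n) ℝ) : Matrix (Fin m) (Fin n) ℝ :=
  Matrix.of fun i j => Real.sign (M i j)

/-- Orthogonal projection onto matrices supported on `supp X`. -/
def POmega {m n : ℕ} (X : Matrix (Fin m) (Fin n) ℝ) (M : Matrix (Fin m) (Fin n) ℝ) :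
    Matrix (Fin m) (Fin n) ℝ :=
  Matrix.of fun i j => if X i j ≠ 0 then M i j else 0

/-- Orthogonal projection onto the tangent space `T` determined by `U`, `V`. -/
def PT {m n r : ℕ} (U : Matrix (Fin m) (Fin r) ℝ) (V : Matrix (Fin n) (Fin r) ℝ)
    (M : Matrix (Fin m) (Fin n) ℝ) : Matrix (Fin m) (Fin n) ℝ :=
  U * Uᵀ * M + M * (V * Vᵀ) - U * Uᵀ * M * (V * Vᵀ)

/-- `‖U‖_{2→∞}`: maximum row Euclidean norm. -/
def two2inf {m r : ℕ} (U : Matrix (Fin m) (Fin r) ℝ) : ℝ :=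
  ⨆ i, Real.sqrt (∑ k, (U i k) ^ 2)

/-- The sparsity measure `α(ρ)` of `X̄_S`. -/
def alpha {m n : ℕ} (X : Matrix (Fin m) (Fin n) ℝ) (ρ : ℝ) : ℝ :=
  max (ρ * n11 (signM X)) (ρ⁻¹ * nII (signM X))

/-- The incoherence measure `β(ρ)` of the singular vectors `U`, `V`. -/
def beta {m n r : ℕ} (U : Matrix (Fin m) (Fin r) ℝ) (V : Matrix (Fin n) (Fin r) ℝ)
    (ρ : ℝ) : ℝ :=
  ρ⁻¹ * linf (U * Uᵀ) + ρ * linf (V * Vᵀ) + two2inf U * two2inf V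

/-- Number of nonzero entries. -/
def suppCard {m n : ℕ} (X : Matrix (Fin m) (Fin n) ℝ) : ℕ :=
  (Finset.univ.filter fun p : Fin m × Fin n => X p.1 p.2 ≠ 0).card

/-! If `P X = X` then each entry of `X` is a combination of the entries of its column,
with coefficients bounded by `‖P‖_∞`. At an entry of maximal modulus this gives
`|X i j| ≤ ‖P‖_∞ · #(nonzeros in column j) · |X i j|`, so `1 ≤ ‖P‖_∞ ‖sign X‖_{1→1}`.
With `P = UUᵀ`, the two factors appear in `α(ρ)` and `β(ρ)` with weights `ρ` and `ρ⁻¹`. -/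

theorem abs_le_linf {m n : ℕ} (M : Matrix (Fin m) (Fin n) ℝ) (i : Fin m) (j : Fin n) :
    |M i j| ≤ linf M :=
  (le_ciSup (Set.finite_range fun j' => |M i j'|).bddAbove j).trans
    (le_ciSup (Set.finite_range fun i' => ⨆ j', |M i' j'|).bddAbove i)

theorem linf_nonneg {m n : ℕ} (M : Matrix (Fin m) (Fin n) ℝ) : 0 ≤ linf M :=
  Real.iSup_nonneg fun _ => Real.iSup_nonneg fun _ => abs_nonneg _

theorem two2inf_nonneg {m r : ℕ} (U : Matrix (Fin m) (Fin r) ℝ) : 0 ≤ two2inf U :=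
  Real.iSup_nonneg fun _ => Real.sqrt_nonneg _

theorem n11_nonneg {m n : ℕ} (M : Matrix (Fin m) (Fin n) ℝ) : 0 ≤ n11 M :=
  Real.iSup_nonneg fun _ => Finset.sum_nonneg fun _ _ => abs_nonneg _

theorem sum_abs_le_n11 {m n : ℕ} (M : Matrix (Fin m) (Fin n) ℝ) (j : Fin n) :
    ∑ i, |M i j| ≤ n11 M :=
  le_ciSup (Set.finite_range fun j' => ∑ i, |M i j'|).bddAbove j

theorem abs_sign_mul_abs (x : ℝ) : |Real.sign x| * |x| = |x| := by
  by_cases h : x = 0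
  · simp [h]
  · rcases Real.sign_apply_eq_of_ne_zero x h with hs | hs <;> simp [hs]

theorem exists_abs_pos_isMax_of_ne_zero {m n : ℕ} {X : Matrix (Fin m) (Fin n) ℝ} (hX : X ≠ 0) :
    ∃ i j, 0 < |X i j| ∧ ∀ k l, |X k l| ≤ |X i j| := by
  obtain ⟨i₀, j₀, hne⟩ : ∃ i j, X i j ≠ 0 := by
    by_contra! h
    exact hX (Matrix.ext h)
  have : Nonempty (Fin m × Fin n) := ⟨(i₀, j₀)⟩
  obtain ⟨⟨i, j⟩, hmax⟩ := Finite.exists_max fun p : Fin m × Fin n => |X p.1 p.2|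
  exact ⟨i, j, (abs_pos.mpr hne).trans_le (hmax (i₀, j₀)), fun k l => hmax (k, l)⟩

theorem one_le_linf_mul_n11_signM {m n : ℕ} {X : Matrix (Fin m) (Fin n) ℝ} (hX : X ≠ 0)
    {P : Matrix (Fin m) (Fin m) ℝ} (hPX : P * X = X) :
    1 ≤ linf P * n11 (signM X) := by
  obtain ⟨i, j, hpos, hmax⟩ := exists_abs_pos_isMax_of_ne_zero hX
  have hentry (k : Fin m) : |P i k * X k j| ≤ linf P * |signM X k j| * |X i j| := by
    have hcol : |X k j| ≤ |signM X k j| * |X i j| := by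
      calc |X k j| = |signM X k j| * |X k j| := (abs_sign_mul_abs (X k j)).symm
        _ ≤ |signM X k j| * |X i j| := mul_le_mul_of_nonneg_left (hmax k j) (abs_nonneg _)
    rw [abs_mul, mul_assoc]
    exact mul_le_mul (abs_le_linf P i k) hcol (abs_nonneg _) (linf_nonneg P)
  have hbound : |X i j| ≤ linf P * n11 (signM X) * |X i j| :=
    calc |X i j| = |∑ k, P i k * X k j| := by rw [← Matrix.mul_apply, hPX]
      _ ≤ ∑ k, |P i k * X k j| := Finset.abs_sum_le_sum_abs _ _
      _ ≤ ∑ k, linf P * |signM X k j| * |X i j| := Finset.sum_le_sum fun k _ => hentry k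
      _ = linf P * (∑ k, |signM X k j|) * |X i j| := by rw [← Finset.sum_mul, ← Finset.mul_sum]
      _ ≤ linf P * n11 (signM X) * |X i j| := by
          gcongr
          · exact linf_nonneg P
          · exact sum_abs_le_n11 _ j
  exact le_of_mul_le_mul_right (by rwa [one_mul]) hpos

theorem mul_transpose_mul_of_transpose_mul_self {m r c : ℕ} {U : Matrix (Fin m) (Fin r) ℝ}
    (hU : Uᵀ * U = 1) (B : Matrix (Fin r) (Fin c) ℝ) : U * Uᵀ * (U * B) = U * B := by
  rw [Matrix.mul_assoc, ← Matrix.mul_assoc Uᵀ, hU, Matrix.one_mul]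

theorem inv_mul_linf_le_beta {m n r : ℕ} (U : Matrix (Fin m) (Fin r) ℝ)
    (V : Matrix (Fin n) (Fin r) ℝ) {ρ : ℝ} (hρ : 0 < ρ) :
    ρ⁻¹ * linf (U * Uᵀ) ≤ beta U V ρ := by
  have := mul_nonneg hρ.le (linf_nonneg (V * Vᵀ))
  have := mul_nonneg (two2inf_nonneg U) (two2inf_nonneg V)
  unfold beta
  linarith

theorem uncertainty_principle_general {m n r : ℕ} (X : Matrix (Fin m) (Fin n) ℝ) (hX : X ≠ 0)
    (U : Matrix (Fin m) (Fin r) ℝ) (V : Matrix (Fin n) (Fin r) ℝ) (σ : Fin r → ℝ)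
    (hU : Uᵀ * U = 1)
    (hsvd : X = U * Matrix.diagonal σ * Vᵀ) :
    ∀ ρ : ℝ, 0 < ρ → 1 ≤ alpha X ρ * beta U V ρ := by
  intro ρ hρ
  have hPX : U * Uᵀ * X = X := by
    rw [hsvd, Matrix.mul_assoc U (diagonal σ)]
    exact mul_transpose_mul_of_transpose_mul_self hU _
  have hα : ρ * n11 (signM X) ≤ alpha X ρ := le_max_left _ _
  have hβ := inv_mul_linf_le_beta U V hρ
  calc 1 ≤ linf (U * Uᵀ) * n11 (signM X) := one_le_linf_mul_n11_signM hX hPX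
    _ = (ρ * n11 (signM X)) * (ρ⁻¹ * linf (U * Uᵀ)) := by field_simp
    _ ≤ alpha X ρ * beta U V ρ :=
        mul_le_mul hα hβ (mul_nonneg (inv_pos.mpr hρ).le (linf_nonneg _))
          ((mul_nonneg hρ.le (n11_nonneg _)).trans hα)

/-- uncertainty principle, a nonzero matrix has `α(ρ)β(ρ) ≥ 1` for all ρ. -/
theorem uncertainty_principle {m n r : ℕ} (X : Matrix (Fin m) (Fin n) ℝ) (hX : X ≠ 0)
    (U : Matrix (Fin m) (Fin r) ℝ) (V : Matrix (Fin n) (Fin r) ℝ) (σ : Fin r → ℝ)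
    (hσ : ∀ i, 0 < σ i) (hU : Uᵀ * U = 1) (hV : Vᵀ * V = 1)
    (hsvd : X = U * Matrix.diagonal σ * Vᵀ) :
    ∀ ρ : ℝ, 0 < ρ → 1 ≤ alpha X ρ * beta U V ρ :=
  uncertainty_principle_general X hX U V σ hU hsvd

end SLR
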